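/- In every L-shaped embedding φ of the tree T₁₃ in the point set S₁₃, the images φ(X₁), φ(X₂), φ(X₃) do not all lie on the same side of φ(Y); that is, it is not the case that all three have y-coordinate strictly greater than that of φ(Y), nor all strictly smaller, nor all x-coordinate strictly greater than that of φ(Y), nor all strictly smaller. -/

import Mathlib

/-- A point set: finitely many points in the plane, no two of which share
an x-coordinate or a y-coordinate. -/
def IsPointSet (S : Finset (ℝ × ℝ)) : Prop :=
  ∀ p ∈ S, ∀ q ∈ S, p ≠ q → p.1 ≠ q.1 ∧ p.2 ≠ q.2

/-- The drawing of the edge `uv`: the union of the two axis-parallel segments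
joining `φ u` and `φ v` through the corner point `c u v`. -/
def LDraw {α : Type*} (φ : α → ℝ × ℝ) (c : α → α → ℝ × ℝ) (u v : α) : Set (ℝ × ℝ) :=
  segment ℝ (φ u) (c u v) ∪ segment ℝ (c u v) (φ v)

/-- `φ` together with the corner assignment `c` is an L-shaped embedding of the
graph `G` in the point set `S`:  `φ` is an injective map of the vertices into `S`,
every edge `uv` is drawn as an `L` whose corner is `((φ u).1, (φ v).2)` or
`((φ v).1, (φ u).2)`, and the drawings of two distinct edges intersect only in the
image `φ w` of a common endpoint `w` of the two edges. -/
def IsLEmbedding {α : Type*} (G : SimpleGraph α) (S : Finset (ℝ × ℝ))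
    (φ : α → ℝ × ℝ) (c : α → α → ℝ × ℝ) : Prop :=
  Function.Injective φ ∧
  (∀ v, φ v ∈ S) ∧
  (∀ u v, c u v = c v u) ∧
  (∀ u v, G.Adj u v → c u v = ((φ u).1, (φ v).2) ∨ c u v = ((φ v).1, (φ u).2)) ∧
  (∀ u v a b, G.Adj u v → G.Adj a b → s(u, v) ≠ s(a, b) →
    ∀ p ∈ LDraw φ c u v ∩ LDraw φ c a b,
      ∃ w, (w = u ∨ w = v) ∧ (w = a ∨ w = b) ∧ p = φ w)

/-- `G` admits an L-shaped embedding in the point set `S`. -/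
def HasLEmbedding {α : Type*} (G : SimpleGraph α) (S : Finset (ℝ × ℝ)) : Prop :=
  ∃ φ c, IsLEmbedding G S φ c

/-- `box` is an `(a 0, …, a (k-1))`-staircase: the `i`-th box consists of `a i` points
with increasing x- and y-coordinates, and every point of a later box lies strictly
below and strictly to the right of every point of an earlier box. -/
def IsStaircase {k : ℕ} (a : Fin k → ℕ) (box : Fin k → Finset (ℝ × ℝ)) : Prop :=
  (∀ i, (box i).card = a i) ∧
  (∀ i, ∀ p ∈ box i, ∀ q ∈ box i, p ≠ q → p.1 ≠ q.1 ∧ (p.1 < q.1 ↔ p.2 < q.2)) ∧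
  (∀ i j : Fin k, i < j → ∀ p ∈ box i, ∀ q ∈ box j, p.1 < q.1 ∧ q.2 < p.2)

/-- The point set of a staircase: the union of its boxes. -/
noncomputable def staircaseSet {k : ℕ} (box : Fin k → Finset (ℝ × ℝ)) : Finset (ℝ × ℝ) :=
  Finset.univ.biUnion box

/-- Parent function of the tree `T₁₃`: vertex `0` is the central vertex `Y`,
vertices `1, 2, 3` are the degree-4 vertices `X₁, X₂, X₃` (children of `Y`),
and vertices `3i+1, 3i+2, 3i+3` are the three leaves adjacent to `Xᵢ`. -/
def T13Par (m : ℕ) : ℕ := if m ≤ 3 then 0 else (m - 4) / 3 + 1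

/-- The tree `T₁₃` on 13 vertices: a vertex `Y` (vertex `0`) adjacent to three vertices
`X₁, X₂, X₃` (vertices `1, 2, 3`), each of which is additionally adjacent to three leaves. -/
def T13 : SimpleGraph (Fin 13) where
  Adj a b := a ≠ b ∧ (T13Par a.val = b.val ∨ T13Par b.val = a.val)
  symm := ⟨fun a b h => ⟨h.1.symm, h.2.symm⟩⟩
  loopless := ⟨fun a h => h.1 rfl⟩

lemma T13_adj_iff (a b : Fin 13) :
    T13.Adj a b ↔ (a ≠ b ∧ (T13Par a.val = b.val ∨ T13Par b.val = a.val)) := Iff.rfl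

/-! ### segment helpers -/

lemma seg_vert {x y1 y2 t : ℝ} (h1 : y1 ≤ t) (h2 : t ≤ y2) (hlt : y1 < y2) :
    ((x, t) : ℝ × ℝ) ∈ segment ℝ (x, y1) (x, y2) := by
  have hd : (0:ℝ) < y2 - y1 := by linarith
  refine ⟨(y2 - t)/(y2 - y1), (t - y1)/(y2 - y1),
    div_nonneg (by linarith) hd.le, div_nonneg (by linarith) hd.le, by field_simp; ring, ?_⟩
  simp only [Prod.smul_mk, smul_eq_mul, Prod.mk_add_mk, Prod.mk.injEq]
  constructor <;> field_simp <;> ring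

lemma seg_horiz {y x1 x2 t : ℝ} (h1 : x1 ≤ t) (h2 : t ≤ x2) (hlt : x1 < x2) :
    ((t, y) : ℝ × ℝ) ∈ segment ℝ (x1, y) (x2, y) := by
  have hd : (0:ℝ) < x2 - x1 := by linarith
  refine ⟨(x2 - t)/(x2 - x1), (t - x1)/(x2 - x1),
    div_nonneg (by linarith) hd.le, div_nonneg (by linarith) hd.le, by field_simp; ring, ?_⟩
  simp only [Prod.smul_mk, smul_eq_mul, Prod.mk_add_mk, Prod.mk.injEq]
  constructor <;> field_simp <;> ring

/-! ### no-overlap lemmas -/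

section NoOverlap

variable {α : Type*} {G : SimpleGraph α} {S : Finset (ℝ × ℝ)} {φ : α → ℝ × ℝ}
  {c : α → α → ℝ × ℝ}

lemma edge_ne {u v w : α} (huv : G.Adj u v) (huw : G.Adj u w) (hvw : v ≠ w) :
    s(u, v) ≠ s(u, w) := by
  intro h
  rw [Sym2.eq_iff] at h
  rcases h with ⟨-, h2⟩ | ⟨h1, -⟩
  · exact hvw h2
  · exact huw.ne h1

lemma no_overlap_vert (hemb : IsLEmbedding G S φ c) {u v w : α} (hvw : v ≠ w)
    (huv : G.Adj u v) (huw : G.Adj u w)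
    (hcv : c u v = ((φ u).1, (φ v).2)) (hcw : c u w = ((φ u).1, (φ w).2))
    (hsame : ((φ u).2 < (φ v).2 ∧ (φ u).2 < (φ w).2) ∨
             ((φ v).2 < (φ u).2 ∧ (φ w).2 < (φ u).2)) : False := by
  obtain ⟨hinj, hS, hsym, hcor, hcross⟩ := hemb
  rcases hsame with ⟨ha, hb⟩ | ⟨ha, hb⟩
  · set t := min (φ v).2 (φ w).2 with ht
    have hut : (φ u).2 < t := lt_min ha hb
    have hQv : ((φ u).1, t) ∈ segment ℝ (φ u) (c u v) := by
      rw [hcv]; exact seg_vert hut.le (min_le_left _ _) ha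
    have hQw : ((φ u).1, t) ∈ segment ℝ (φ u) (c u w) := by
      rw [hcw]; exact seg_vert hut.le (min_le_right _ _) hb
    obtain ⟨z, hz1, hz2, hz3⟩ := hcross u v u w huv huw (edge_ne huv huw hvw)
      ((φ u).1, t) ⟨Or.inl hQv, Or.inl hQw⟩
    rcases hz1 with rfl | rfl
    · have := congrArg Prod.snd hz3
      simp only at this
      linarith
    · rcases hz2 with h | h
      · exact huv.ne h.symm
      · exact hvw h
  · set t := max (φ v).2 (φ w).2 with ht
    have hut : t < (φ u).2 := max_lt ha hb
    have hQv : ((φ u).1, t) ∈ segment ℝ (φ u) (c u v) := by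
      rw [hcv, segment_symm]; exact seg_vert (le_max_left _ _) hut.le ha
    have hQw : ((φ u).1, t) ∈ segment ℝ (φ u) (c u w) := by
      rw [hcw, segment_symm]; exact seg_vert (le_max_right _ _) hut.le hb
    obtain ⟨z, hz1, hz2, hz3⟩ := hcross u v u w huv huw (edge_ne huv huw hvw)
      ((φ u).1, t) ⟨Or.inl hQv, Or.inl hQw⟩
    rcases hz1 with rfl | rfl
    · have := congrArg Prod.snd hz3
      simp only at this
      linarith
    · rcases hz2 with h | h
      · exact huv.ne h.symm
      · exact hvw h

lemma no_overlap_horiz (hemb : IsLEmbedding G S φ c) {u v w : α} (hvw : v ≠ w)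
    (huv : G.Adj u v) (huw : G.Adj u w)
    (hcv : c u v = ((φ v).1, (φ u).2)) (hcw : c u w = ((φ w).1, (φ u).2))
    (hsame : ((φ u).1 < (φ v).1 ∧ (φ u).1 < (φ w).1) ∨
             ((φ v).1 < (φ u).1 ∧ (φ w).1 < (φ u).1)) : False := by
  obtain ⟨hinj, hS, hsym, hcor, hcross⟩ := hemb
  rcases hsame with ⟨ha, hb⟩ | ⟨ha, hb⟩
  · set t := min (φ v).1 (φ w).1 with ht
    have hut : (φ u).1 < t := lt_min ha hb
    have hQv : (t, (φ u).2) ∈ segment ℝ (φ u) (c u v) := by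
      rw [hcv]; exact seg_horiz hut.le (min_le_left _ _) ha
    have hQw : (t, (φ u).2) ∈ segment ℝ (φ u) (c u w) := by
      rw [hcw]; exact seg_horiz hut.le (min_le_right _ _) hb
    obtain ⟨z, hz1, hz2, hz3⟩ := hcross u v u w huv huw (edge_ne huv huw hvw)
      (t, (φ u).2) ⟨Or.inl hQv, Or.inl hQw⟩
    rcases hz1 with rfl | rfl
    · have := congrArg Prod.fst hz3
      simp only at this
      linarith
    · rcases hz2 with h | h
      · exact huv.ne h.symm
      · exact hvw h
  · set t := max (φ v).1 (φ w).1 with ht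
    have hut : t < (φ u).1 := max_lt ha hb
    have hQv : (t, (φ u).2) ∈ segment ℝ (φ u) (c u v) := by
      rw [hcv, segment_symm]; exact seg_horiz (le_max_left _ _) hut.le ha
    have hQw : (t, (φ u).2) ∈ segment ℝ (φ u) (c u w) := by
      rw [hcw, segment_symm]; exact seg_horiz (le_max_right _ _) hut.le hb
    obtain ⟨z, hz1, hz2, hz3⟩ := hcross u v u w huv huw (edge_ne huv huw hvw)
      (t, (φ u).2) ⟨Or.inl hQv, Or.inl hQw⟩
    rcases hz1 with rfl | rfl
    · have := congrArg Prod.fst hz3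
      simp only at this
      linarith
    · rcases hz2 with h | h
      · exact huv.ne h.symm
      · exact hvw h

end NoOverlap

/-! ### staircase basics -/

lemma staircase_mem_box {k : ℕ} {box : Fin k → Finset (ℝ × ℝ)} {p : ℝ × ℝ}
    (hp : p ∈ staircaseSet box) : ∃ i, p ∈ box i := by
  simp only [staircaseSet, Finset.mem_biUnion, Finset.mem_univ, true_and] at hp
  exact hp

lemma staircase_isPointSet {k : ℕ} {a : Fin k → ℕ} {box : Fin k → Finset (ℝ × ℝ)}
    (hbox : IsStaircase a box) : IsPointSet (staircaseSet box) := by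
  intro p hp q hq hpq
  obtain ⟨i, hi⟩ := staircase_mem_box hp
  obtain ⟨j, hj⟩ := staircase_mem_box hq
  rcases lt_trichotomy i j with h | rfl | h
  · obtain ⟨h1, h2⟩ := hbox.2.2 i j h p hi q hj
    exact ⟨ne_of_lt h1, (ne_of_lt h2).symm⟩
  · obtain ⟨h1, h2⟩ := hbox.2.1 i p hi q hj hpq
    refine ⟨h1, fun hy => ?_⟩
    rcases lt_trichotomy p.1 q.1 with hx | hx | hx
    · have := h2.mp hx; linarith
    · exact h1 hx
    · have := (hbox.2.1 i q hj p hi hpq.symm).2.mp hx; linarith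
  · obtain ⟨h1, h2⟩ := hbox.2.2 j i h q hj p hi
    exact ⟨(ne_of_lt h1).symm, ne_of_lt h2⟩

lemma staircase_same_box {k : ℕ} {a : Fin k → ℕ} {box : Fin k → Finset (ℝ × ℝ)}
    (hbox : IsStaircase a box) {i j : Fin k} {p q : ℝ × ℝ}
    (hp : p ∈ box i) (hq : q ∈ box j) (hx : p.1 < q.1) (hy : p.2 < q.2) : i = j := by
  rcases lt_trichotomy i j with h | h | h
  · have := (hbox.2.2 i j h p hp q hq).2; linarith
  · exact h
  · have := (hbox.2.2 j i h q hq p hp).1; linarith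

/-! ### leaves of T13 -/

lemma T13_leaves (k : Fin 13) (hk : k = 1 ∨ k = 2 ∨ k = 3) :
    ∃ m1 m2 m3 : Fin 13, m1 ≠ m2 ∧ m1 ≠ m3 ∧ m2 ≠ m3 ∧
      4 ≤ m1.val ∧ 4 ≤ m2.val ∧ 4 ≤ m3.val ∧
      T13.Adj k m1 ∧ T13.Adj k m2 ∧ T13.Adj k m3 := by
  rcases hk with rfl | rfl | rfl
  · exact ⟨4, 5, 6, by decide, by decide, by decide, by decide, by decide, by decide,
      (T13_adj_iff _ _).mpr (by decide), (T13_adj_iff _ _).mpr (by decide),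
      (T13_adj_iff _ _).mpr (by decide)⟩
  · exact ⟨7, 8, 9, by decide, by decide, by decide, by decide, by decide, by decide,
      (T13_adj_iff _ _).mpr (by decide), (T13_adj_iff _ _).mpr (by decide),
      (T13_adj_iff _ _).mpr (by decide)⟩
  · exact ⟨10, 11, 12, by decide, by decide, by decide, by decide, by decide, by decide,
      (T13_adj_iff _ _).mpr (by decide), (T13_adj_iff _ _).mpr (by decide),
      (T13_adj_iff _ _).mpr (by decide)⟩

lemma T13_adj_0 (j : Fin 13) (hj : j = 1 ∨ j = 2 ∨ j = 3) : T13.Adj 0 j := by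
  rcases hj with rfl | rfl | rfl <;> exact (T13_adj_iff _ _).mpr (by decide)

/-! ### the core case -/

lemma core_aux (box : Fin 7 → Finset (ℝ × ℝ))
    (hbox : IsStaircase ![2, 2, 2, 1, 2, 2, 2] box)
    (φ : Fin 13 → ℝ × ℝ) (c : Fin 13 → Fin 13 → ℝ × ℝ)
    (hemb : IsLEmbedding T13 (staircaseSet box) φ c)
    (i k : Fin 13) (hik : i ≠ k) (hi3 : i = 1 ∨ i = 2 ∨ i = 3) (hk3 : k = 1 ∨ k = 2 ∨ k = 3)
    (hyi : (φ 0).2 < (φ i).2) (hyk : (φ 0).2 < (φ k).2) (hxk : (φ 0).1 < (φ k).1)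
    (hci : c 0 i = ((φ 0).1, (φ i).2)) (hck : c 0 k = ((φ k).1, (φ 0).2)) : False := by
  obtain ⟨hinj, hS, hsym, hcor, hcross⟩ := id hemb
  have hi0 : i ≠ 0 := by rcases hi3 with rfl | rfl | rfl <;> decide
  have hk0 : k ≠ 0 := by rcases hk3 with rfl | rfl | rfl <;> decide
  have hival : i.val ≤ 3 := by rcases hi3 with rfl | rfl | rfl <;> decide
  have hkval : k.val ≤ 3 := by rcases hk3 with rfl | rfl | rfl <;> decide
  have hcoord : ∀ u v : Fin 13, u ≠ v → (φ u).1 ≠ (φ v).1 ∧ (φ u).2 ≠ (φ v).2 :=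
    fun u v h => staircase_isPointSet hbox _ (hS u) _ (hS v) (fun he => h (hinj he))
  -- the box of Y and X_R
  obtain ⟨t0, h0t⟩ := staircase_mem_box (hS 0)
  obtain ⟨tk, hkt⟩ := staircase_mem_box (hS k)
  have htt : t0 = tk := staircase_same_box hbox h0t hkt hxk hyk
  subst htt
  have hφ0k : φ 0 ≠ φ k := fun h => hk0 (hinj h).symm
  have hcard2 : (box t0).card = 2 := by
    have h1 : 1 < (box t0).card := Finset.one_lt_card.mpr ⟨φ 0, h0t, φ k, hkt, hφ0k⟩
    have h2 : (box t0).card ≤ 2 := by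
      rw [hbox.1 t0]
      exact (by decide : ∀ j : Fin 7, (![2, 2, 2, 1, 2, 2, 2] : Fin 7 → ℕ) j ≤ 2) t0
    omega
  have hboxeq : box t0 = {φ 0, φ k} := by
    refine (Finset.eq_of_subset_of_card_le ?_ ?_).symm
    · intro z hz
      simp only [Finset.mem_insert, Finset.mem_singleton] at hz
      rcases hz with rfl | rfl
      · exact h0t
      · exact hkt
    · rw [hcard2, Finset.card_pair hφ0k]
  have hmem_t0 : ∀ z ∈ box t0, z = φ 0 ∨ z = φ k := by
    intro z hz
    rw [hboxeq] at hz
    simpa using hz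
  -- points other than Y, X_R are in other boxes
  have hside : ∀ u : Fin 13, u ≠ 0 → u ≠ k →
      ((φ u).1 < (φ 0).1 ∧ (φ k).2 < (φ u).2) ∨
      ((φ k).1 < (φ u).1 ∧ (φ u).2 < (φ 0).2) := by
    intro u hu0 huk
    obtain ⟨s, hs⟩ := staircase_mem_box (hS u)
    have hsne : s ≠ t0 := by
      intro h
      subst h
      rcases hmem_t0 _ hs with h | h
      · exact hu0 (hinj h)
      · exact huk (hinj h)
    rcases lt_or_gt_of_ne hsne with h | h
    · exact Or.inl ⟨(hbox.2.2 s t0 h (φ u) hs (φ 0) h0t).1,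
        (hbox.2.2 s t0 h (φ u) hs (φ k) hkt).2⟩
    · exact Or.inr ⟨(hbox.2.2 t0 s h (φ k) hkt (φ u) hs).1,
        (hbox.2.2 t0 s h (φ 0) h0t (φ u) hs).2⟩
  -- X_U lies above X_R
  have hyki : (φ k).2 < (φ i).2 := by
    rcases hside i hi0 hik with ⟨-, h⟩ | ⟨-, h⟩
    · exact h
    · linarith
  -- the edge from X_R to Y points down at X_R
  have hck0 : c k 0 = ((φ k).1, (φ 0).2) := (hsym k 0).trans hck
  have hadjk0 : T13.Adj k 0 := (T13_adj_0 k hk3).symm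
  have hadj0i : T13.Adj 0 i := T13_adj_0 i hi3
  -- the final crossing argument: a leaf to the left of X_R is impossible
  have final : ∀ m : Fin 13, T13.Adj k m → 4 ≤ m.val →
      c k m = ((φ m).1, (φ k).2) → (φ m).1 < (φ k).1 → False := by
    intro m hadjm h4m hcm hxm
    have hm0 : m ≠ 0 := Fin.ne_of_val_ne (by omega)
    have hmk : m ≠ k := Fin.ne_of_val_ne (by omega)
    have hmi : m ≠ i := Fin.ne_of_val_ne (by omega)
    have hxm0 : (φ m).1 < (φ 0).1 := by
      rcases hside m hm0 hmk with ⟨h, -⟩ | ⟨h, -⟩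
      · exact h
      · linarith
    have hP1 : ((φ 0).1, (φ k).2) ∈ LDraw φ c 0 i := by
      left
      rw [hci]
      exact seg_vert hyk.le hyki.le hyi
    have hP2 : ((φ 0).1, (φ k).2) ∈ LDraw φ c k m := by
      left
      rw [hcm, segment_symm]
      exact seg_horiz hxm0.le hxk.le (by linarith)
    have hne : s(0, i) ≠ s(k, m) := by
      intro h
      rw [Sym2.eq_iff] at h
      rcases h with ⟨h1, -⟩ | ⟨h1, -⟩
      · exact hk0 h1.symm
      · exact hm0 h1.symm
    obtain ⟨w, hw1, hw2, -⟩ := hcross 0 i k m hadj0i hadjm hne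
      ((φ 0).1, (φ k).2) ⟨hP1, hP2⟩
    rcases hw1 with rfl | rfl
    · rcases hw2 with h | h
      · exact hk0 h.symm
      · exact hm0 h.symm
    · rcases hw2 with h | h
      · exact hik h
      · exact hmi h.symm
  -- classify the corner of each leaf edge at X_R
  have tagm : ∀ m : Fin 13, T13.Adj k m → 4 ≤ m.val →
      (c k m = ((φ k).1, (φ m).2) ∧ (φ k).2 < (φ m).2) ∨
      (c k m = ((φ m).1, (φ k).2) ∧ (φ k).1 < (φ m).1) := by
    intro m hadjm h4m
    have hmk : m ≠ k := Fin.ne_of_val_ne (by omega)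
    have hm0 : m ≠ 0 := Fin.ne_of_val_ne (by omega)
    rcases hcor k m hadjm with h | h
    · left
      refine ⟨h, ?_⟩
      rcases lt_or_gt_of_ne (hcoord k m hmk.symm).2 with hy | hy
      · exact hy
      · exact absurd (no_overlap_vert hemb hm0.symm hadjk0 hadjm hck0 h
          (Or.inr ⟨hyk, hy⟩)) id
    · right
      refine ⟨h, ?_⟩
      rcases lt_or_gt_of_ne (hcoord k m hmk.symm).1 with hx | hx
      · exact hx
      · exact absurd (final m hadjm h4m h hx) id
  obtain ⟨m1, m2, m3, h12, h13, h23, hv1, hv2, hv3, ha1, ha2, ha3⟩ := T13_leaves k hk3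
  rcases tagm m1 ha1 hv1 with ⟨c1, d1⟩ | ⟨c1, d1⟩ <;>
    rcases tagm m2 ha2 hv2 with ⟨c2, d2⟩ | ⟨c2, d2⟩ <;>
    rcases tagm m3 ha3 hv3 with ⟨c3, d3⟩ | ⟨c3, d3⟩
  · exact no_overlap_vert hemb h12 ha1 ha2 c1 c2 (Or.inl ⟨d1, d2⟩)
  · exact no_overlap_vert hemb h12 ha1 ha2 c1 c2 (Or.inl ⟨d1, d2⟩)
  · exact no_overlap_vert hemb h13 ha1 ha3 c1 c3 (Or.inl ⟨d1, d3⟩)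
  · exact no_overlap_horiz hemb h23 ha2 ha3 c2 c3 (Or.inl ⟨d2, d3⟩)
  · exact no_overlap_vert hemb h23 ha2 ha3 c2 c3 (Or.inl ⟨d2, d3⟩)
  · exact no_overlap_horiz hemb h13 ha1 ha3 c1 c3 (Or.inl ⟨d1, d3⟩)
  · exact no_overlap_horiz hemb h12 ha1 ha2 c1 c2 (Or.inl ⟨d1, d2⟩)
  · exact no_overlap_horiz hemb h12 ha1 ha2 c1 c2 (Or.inl ⟨d1, d2⟩)

lemma core (box : Fin 7 → Finset (ℝ × ℝ))
    (hbox : IsStaircase ![2, 2, 2, 1, 2, 2, 2] box)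
    (φ : Fin 13 → ℝ × ℝ) (c : Fin 13 → Fin 13 → ℝ × ℝ)
    (hemb : IsLEmbedding T13 (staircaseSet box) φ c) :
    ¬ ((φ 0).2 < (φ 1).2 ∧ (φ 0).2 < (φ 2).2 ∧ (φ 0).2 < (φ 3).2) := by
  rintro ⟨hy1, hy2, hy3⟩
  obtain ⟨hinj, hS, hsym, hcor, hcross⟩ := id hemb
  have hcoord : ∀ u v : Fin 13, u ≠ v → (φ u).1 ≠ (φ v).1 ∧ (φ u).2 ≠ (φ v).2 :=
    fun u v h => staircase_isPointSet hbox _ (hS u) _ (hS v) (fun he => h (hinj he))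
  have a1 : T13.Adj 0 1 := T13_adj_0 1 (by decide)
  have a2 : T13.Adj 0 2 := T13_adj_0 2 (by decide)
  have a3 : T13.Adj 0 3 := T13_adj_0 3 (by decide)
  have aux : ∀ i k : Fin 13, i ≠ k → (i = 1 ∨ i = 2 ∨ i = 3) → (k = 1 ∨ k = 2 ∨ k = 3) →
      (φ 0).2 < (φ i).2 → (φ 0).2 < (φ k).2 → (φ 0).1 < (φ k).1 →
      c 0 i = ((φ 0).1, (φ i).2) → c 0 k = ((φ k).1, (φ 0).2) → False :=
    core_aux box hbox φ c hemb
  have s1 := lt_or_gt_of_ne (hcoord 1 0 (by decide)).1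
  have s2 := lt_or_gt_of_ne (hcoord 2 0 (by decide)).1
  have s3 := lt_or_gt_of_ne (hcoord 3 0 (by decide)).1
  rcases hcor 0 1 a1 with e1 | e1 <;> rcases hcor 0 2 a2 with e2 | e2 <;>
    rcases hcor 0 3 a3 with e3 | e3
  · exact no_overlap_vert hemb (by decide) a1 a2 e1 e2 (Or.inl ⟨hy1, hy2⟩)
  · exact no_overlap_vert hemb (by decide) a1 a2 e1 e2 (Or.inl ⟨hy1, hy2⟩)
  · exact no_overlap_vert hemb (by decide) a1 a3 e1 e3 (Or.inl ⟨hy1, hy3⟩)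
  · -- V H H : vertical 1, horizontal 2 3
    rcases s2 with l2 | r2 <;> rcases s3 with l3 | r3
    · exact no_overlap_horiz hemb (by decide) a2 a3 e2 e3 (Or.inr ⟨l2, l3⟩)
    · exact aux 1 3 (by decide) (by decide) (by decide) hy1 hy3 r3 e1 e3
    · exact aux 1 2 (by decide) (by decide) (by decide) hy1 hy2 r2 e1 e2
    · exact no_overlap_horiz hemb (by decide) a2 a3 e2 e3 (Or.inl ⟨r2, r3⟩)
  · exact no_overlap_vert hemb (by decide) a2 a3 e2 e3 (Or.inl ⟨hy2, hy3⟩)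
  · -- H V H
    rcases s1 with l1 | r1 <;> rcases s3 with l3 | r3
    · exact no_overlap_horiz hemb (by decide) a1 a3 e1 e3 (Or.inr ⟨l1, l3⟩)
    · exact aux 2 3 (by decide) (by decide) (by decide) hy2 hy3 r3 e2 e3
    · exact aux 2 1 (by decide) (by decide) (by decide) hy2 hy1 r1 e2 e1
    · exact no_overlap_horiz hemb (by decide) a1 a3 e1 e3 (Or.inl ⟨r1, r3⟩)
  · -- H H V
    rcases s1 with l1 | r1 <;> rcases s2 with l2 | r2
    · exact no_overlap_horiz hemb (by decide) a1 a2 e1 e2 (Or.inr ⟨l1, l2⟩)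
    · exact aux 3 2 (by decide) (by decide) (by decide) hy3 hy2 r2 e3 e2
    · exact aux 3 1 (by decide) (by decide) (by decide) hy3 hy1 r1 e3 e1
    · exact no_overlap_horiz hemb (by decide) a1 a2 e1 e2 (Or.inl ⟨r1, r2⟩)
  · -- H H H
    rcases s1 with l1 | r1 <;> rcases s2 with l2 | r2 <;> rcases s3 with l3 | r3
    · exact no_overlap_horiz hemb (by decide) a1 a2 e1 e2 (Or.inr ⟨l1, l2⟩)
    · exact no_overlap_horiz hemb (by decide) a1 a2 e1 e2 (Or.inr ⟨l1, l2⟩)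
    · exact no_overlap_horiz hemb (by decide) a1 a3 e1 e3 (Or.inr ⟨l1, l3⟩)
    · exact no_overlap_horiz hemb (by decide) a2 a3 e2 e3 (Or.inl ⟨r2, r3⟩)
    · exact no_overlap_horiz hemb (by decide) a2 a3 e2 e3 (Or.inr ⟨l2, l3⟩)
    · exact no_overlap_horiz hemb (by decide) a1 a3 e1 e3 (Or.inl ⟨r1, r3⟩)
    · exact no_overlap_horiz hemb (by decide) a1 a2 e1 e2 (Or.inl ⟨r1, r2⟩)
    · exact no_overlap_horiz hemb (by decide) a1 a2 e1 e2 (Or.inl ⟨r1, r2⟩)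
section Transport

variable (f : ℝ × ℝ → ℝ × ℝ)

lemma seg_map (hadd : ∀ p q, f (p + q) = f p + f q)
    (hsmul : ∀ (t : ℝ) p, f (t • p) = t • f p) {p a b : ℝ × ℝ}
    (h : p ∈ segment ℝ a b) : f p ∈ segment ℝ (f a) (f b) := by
  obtain ⟨ta, tb, h0, h1, hs, he⟩ := h
  exact ⟨ta, tb, h0, h1, hs, by rw [← he, hadd, hsmul, hsmul]⟩

lemma lemb_transport (hadd : ∀ p q, f (p + q) = f p + f q)
    (hsmul : ∀ (t : ℝ) p, f (t • p) = t • f p)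
    (hinv : ∀ p, f (f p) = p)
    (hcorner : ∀ p q : ℝ × ℝ, f (p.1, q.2) = ((f p).1, (f q).2) ∨ f (p.1, q.2) = ((f q).1, (f p).2))
    {α : Type*} {G : SimpleGraph α} {S : Finset (ℝ × ℝ)} {φ : α → ℝ × ℝ} {c : α → α → ℝ × ℝ}
    (h : IsLEmbedding G S φ c) :
    IsLEmbedding G (S.image f) (fun v => f (φ v)) (fun u v => f (c u v)) := by
  obtain ⟨hinj, hS, hsym, hcor, hcross⟩ := h
  have hfinj : Function.Injective f := fun p q hpq => by rw [← hinv p, hpq, hinv]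
  refine ⟨fun u v huv => hinj (hfinj huv), fun v => Finset.mem_image_of_mem f (hS v),
    fun u v => congrArg f (hsym u v), ?_, ?_⟩
  · intro u v hadj
    show f (c u v) = ((f (φ u)).1, (f (φ v)).2) ∨ f (c u v) = ((f (φ v)).1, (f (φ u)).2)
    rcases hcor u v hadj with h' | h'
    · rw [h']; exact hcorner (φ u) (φ v)
    · rw [h']; rcases hcorner (φ v) (φ u) with h'' | h''
      · exact Or.inr h''
      · exact Or.inl h''
  · intro u v a b hadj hadj' hne p hp
    have key : ∀ (x y : α) (q : ℝ × ℝ), q ∈ LDraw (fun v => f (φ v)) (fun u v => f (c u v)) x y →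
        f q ∈ LDraw φ c x y := by
      intro x y q hq
      rcases hq with hq | hq
      · left
        have := seg_map f hadd hsmul hq
        rwa [hinv, hinv] at this
      · right
        have := seg_map f hadd hsmul hq
        rwa [hinv, hinv] at this
    obtain ⟨w, hw1, hw2, hw3⟩ := hcross u v a b hadj hadj' hne (f p)
      ⟨key u v p hp.1, key a b p hp.2⟩
    exact ⟨w, hw1, hw2, by rw [← hinv p, hw3]⟩

end Transport

section StaircaseTransport

lemma staircase_neg {a : Fin 7 → ℕ} {box : Fin 7 → Finset (ℝ × ℝ)}
    (hbox : IsStaircase a box) (ha : ∀ i : Fin 7, a i.rev = a i) :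
    IsStaircase a (fun i => (box i.rev).image (fun p => (-p.1, -p.2))) := by
  obtain ⟨hcard, hwithin, hcross⟩ := hbox
  have hfinj : Function.Injective (fun p : ℝ × ℝ => ((-p.1, -p.2) : ℝ × ℝ)) := by
    intro p q h
    simp only [Prod.mk.injEq, neg_inj] at h
    exact Prod.ext h.1 h.2
  refine ⟨fun i => by rw [Finset.card_image_of_injective _ hfinj, hcard, ha], ?_, ?_⟩
  · intro i p hp q hq hpq
    simp only [Finset.mem_image] at hp hq
    obtain ⟨p0, hp0, rfl⟩ := hp
    obtain ⟨q0, hq0, rfl⟩ := hq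
    have hne : q0 ≠ p0 := fun h => hpq (by rw [h])
    obtain ⟨h1, h2⟩ := hwithin i.rev q0 hq0 p0 hp0 hne
    constructor
    · simpa using fun h => h1 (by linarith)
    · simp only
      constructor
      · intro h; have := h2.mp (by linarith); linarith
      · intro h; have := h2.mpr (by linarith); linarith
  · intro i j hij p hp q hq
    simp only [Finset.mem_image] at hp hq
    obtain ⟨p0, hp0, rfl⟩ := hp
    obtain ⟨q0, hq0, rfl⟩ := hq
    obtain ⟨h1, h2⟩ := hcross j.rev i.rev (by simpa using hij) q0 hq0 p0 hp0
    constructor <;> simp <;> linarith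

lemma staircase_swap {a : Fin 7 → ℕ} {box : Fin 7 → Finset (ℝ × ℝ)}
    (hbox : IsStaircase a box) (ha : ∀ i : Fin 7, a i.rev = a i) :
    IsStaircase a (fun i => (box i.rev).image (fun p => (p.2, p.1))) := by
  obtain ⟨hcard, hwithin, hcross⟩ := hbox
  have hfinj : Function.Injective (fun p : ℝ × ℝ => ((p.2, p.1) : ℝ × ℝ)) := by
    intro p q h
    simp only [Prod.mk.injEq] at h
    exact Prod.ext h.2 h.1
  refine ⟨fun i => by rw [Finset.card_image_of_injective _ hfinj, hcard, ha], ?_, ?_⟩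
  · intro i p hp q hq hpq
    simp only [Finset.mem_image] at hp hq
    obtain ⟨p0, hp0, rfl⟩ := hp
    obtain ⟨q0, hq0, rfl⟩ := hq
    have hne : p0 ≠ q0 := fun h => hpq (by rw [h])
    obtain ⟨h1, h2⟩ := hwithin i.rev p0 hp0 q0 hq0 hne
    have hy : p0.2 ≠ q0.2 := by
      intro h
      rcases lt_trichotomy p0.1 q0.1 with hx | hx | hx
      · have := h2.mp hx; linarith
      · exact h1 hx
      · have := (hwithin i.rev q0 hq0 p0 hp0 hne.symm).2.mp hx; linarith
    exact ⟨hy, by simpa using h2.symm⟩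
  · intro i j hij p hp q hq
    simp only [Finset.mem_image] at hp hq
    obtain ⟨p0, hp0, rfl⟩ := hp
    obtain ⟨q0, hq0, rfl⟩ := hq
    obtain ⟨h1, h2⟩ := hcross j.rev i.rev (by simpa using hij) q0 hq0 p0 hp0
    exact ⟨h2, h1⟩

lemma staircaseSet_image (box : Fin 7 → Finset (ℝ × ℝ)) (f : ℝ × ℝ → ℝ × ℝ) :
    staircaseSet (fun i => (box i.rev).image f) = (staircaseSet box).image f := by
  ext z
  simp only [staircaseSet, Finset.mem_biUnion, Finset.mem_image, Finset.mem_univ, true_and]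
  constructor
  · rintro ⟨i, w, hw, rfl⟩
    exact ⟨w, ⟨i.rev, hw⟩, rfl⟩
  · rintro ⟨w, ⟨i, hw⟩, rfl⟩
    exact ⟨i.rev, w, by rwa [Fin.rev_rev], rfl⟩

end StaircaseTransport

/-! ### the two transformations -/

lemma negf_add : ∀ p q : ℝ × ℝ, (fun p : ℝ × ℝ => ((-p.1, -p.2) : ℝ × ℝ)) (p + q) =
    (fun p : ℝ × ℝ => ((-p.1, -p.2) : ℝ × ℝ)) p + (fun p : ℝ × ℝ => ((-p.1, -p.2) : ℝ × ℝ)) q := by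
  intro p q
  simp [Prod.ext_iff]
  constructor <;> ring

lemma negf_smul : ∀ (t : ℝ) (p : ℝ × ℝ), (fun p : ℝ × ℝ => ((-p.1, -p.2) : ℝ × ℝ)) (t • p) =
    t • (fun p : ℝ × ℝ => ((-p.1, -p.2) : ℝ × ℝ)) p := by
  intro t p
  simp [Prod.ext_iff]

lemma negf_inv : ∀ p : ℝ × ℝ, (fun p : ℝ × ℝ => ((-p.1, -p.2) : ℝ × ℝ))
    ((fun p : ℝ × ℝ => ((-p.1, -p.2) : ℝ × ℝ)) p) = p := by
  intro p; simp

lemma negf_corner : ∀ p q : ℝ × ℝ,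
    (fun p : ℝ × ℝ => ((-p.1, -p.2) : ℝ × ℝ)) (p.1, q.2) =
      (((fun p : ℝ × ℝ => ((-p.1, -p.2) : ℝ × ℝ)) p).1,
       ((fun p : ℝ × ℝ => ((-p.1, -p.2) : ℝ × ℝ)) q).2) ∨
    (fun p : ℝ × ℝ => ((-p.1, -p.2) : ℝ × ℝ)) (p.1, q.2) =
      (((fun p : ℝ × ℝ => ((-p.1, -p.2) : ℝ × ℝ)) q).1,
       ((fun p : ℝ × ℝ => ((-p.1, -p.2) : ℝ × ℝ)) p).2) :=
  fun _ _ => Or.inl rfl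

lemma swapf_add : ∀ p q : ℝ × ℝ, (fun p : ℝ × ℝ => ((p.2, p.1) : ℝ × ℝ)) (p + q) =
    (fun p : ℝ × ℝ => ((p.2, p.1) : ℝ × ℝ)) p + (fun p : ℝ × ℝ => ((p.2, p.1) : ℝ × ℝ)) q :=
  fun _ _ => rfl

lemma swapf_smul : ∀ (t : ℝ) (p : ℝ × ℝ), (fun p : ℝ × ℝ => ((p.2, p.1) : ℝ × ℝ)) (t • p) =
    t • (fun p : ℝ × ℝ => ((p.2, p.1) : ℝ × ℝ)) p :=
  fun _ _ => rfl

lemma swapf_inv : ∀ p : ℝ × ℝ, (fun p : ℝ × ℝ => ((p.2, p.1) : ℝ × ℝ))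
    ((fun p : ℝ × ℝ => ((p.2, p.1) : ℝ × ℝ)) p) = p :=
  fun _ => rfl

lemma swapf_corner : ∀ p q : ℝ × ℝ,
    (fun p : ℝ × ℝ => ((p.2, p.1) : ℝ × ℝ)) (p.1, q.2) =
      (((fun p : ℝ × ℝ => ((p.2, p.1) : ℝ × ℝ)) p).1,
       ((fun p : ℝ × ℝ => ((p.2, p.1) : ℝ × ℝ)) q).2) ∨
    (fun p : ℝ × ℝ => ((p.2, p.1) : ℝ × ℝ)) (p.1, q.2) =
      (((fun p : ℝ × ℝ => ((p.2, p.1) : ℝ × ℝ)) q).1,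
       ((fun p : ℝ × ℝ => ((p.2, p.1) : ℝ × ℝ)) p).2) :=
  fun _ _ => Or.inr rfl

/-! ### the main theorem -/


/-- In every L-shaped embedding of `T₁₃` in the `(2,2,2,1,2,2,2)`-staircase `S₁₃`,
the images of `X₁, X₂, X₃` (vertices `1, 2, 3`) do not all lie on the same side
(above, below, right, or left) of the image of `Y` (vertex `0`). -/
theorem T13_Xs_not_on_one_side_of_Y (box : Fin 7 → Finset (ℝ × ℝ))
    (hbox : IsStaircase ![2, 2, 2, 1, 2, 2, 2] box)
    (φ : Fin 13 → ℝ × ℝ) (c : Fin 13 → Fin 13 → ℝ × ℝ)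
    (hemb : IsLEmbedding T13 (staircaseSet box) φ c) :
    ¬ (((φ 0).2 < (φ 1).2 ∧ (φ 0).2 < (φ 2).2 ∧ (φ 0).2 < (φ 3).2) ∨
       ((φ 1).2 < (φ 0).2 ∧ (φ 2).2 < (φ 0).2 ∧ (φ 3).2 < (φ 0).2) ∨
       ((φ 0).1 < (φ 1).1 ∧ (φ 0).1 < (φ 2).1 ∧ (φ 0).1 < (φ 3).1) ∨
       ((φ 1).1 < (φ 0).1 ∧ (φ 2).1 < (φ 0).1 ∧ (φ 3).1 < (φ 0).1)) := by
  have harev : ∀ i : Fin 7, (![2, 2, 2, 1, 2, 2, 2] : Fin 7 → ℕ) i.rev =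
      (![2, 2, 2, 1, 2, 2, 2] : Fin 7 → ℕ) i := by decide
  rintro (hA | hB | hC | hD)
  · exact core box hbox φ c hemb hA
  · have hemb2 := lemb_transport (fun p : ℝ × ℝ => ((-p.1, -p.2) : ℝ × ℝ))
      negf_add negf_smul negf_inv negf_corner hemb
    rw [← staircaseSet_image box (fun p : ℝ × ℝ => ((-p.1, -p.2) : ℝ × ℝ))] at hemb2
    have hbox2 := staircase_neg hbox harev
    exact core _ hbox2 _ _ hemb2
      ⟨neg_lt_neg hB.1, neg_lt_neg hB.2.1, neg_lt_neg hB.2.2⟩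
  · have hemb2 := lemb_transport (fun p : ℝ × ℝ => ((p.2, p.1) : ℝ × ℝ))
      swapf_add swapf_smul swapf_inv swapf_corner hemb
    rw [← staircaseSet_image box (fun p : ℝ × ℝ => ((p.2, p.1) : ℝ × ℝ))] at hemb2
    have hbox2 := staircase_swap hbox harev
    exact core _ hbox2 _ _ hemb2 ⟨hC.1, hC.2.1, hC.2.2⟩
  · have hemb2 := lemb_transport (fun p : ℝ × ℝ => ((-p.1, -p.2) : ℝ × ℝ))
      negf_add negf_smul negf_inv negf_corner hemb
    rw [← staircaseSet_image box (fun p : ℝ × ℝ => ((-p.1, -p.2) : ℝ × ℝ))] at hemb2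
    have hbox2 := staircase_neg hbox harev
    have hemb3 := lemb_transport (fun p : ℝ × ℝ => ((p.2, p.1) : ℝ × ℝ))
      swapf_add swapf_smul swapf_inv swapf_corner hemb2
    rw [← staircaseSet_image _ (fun p : ℝ × ℝ => ((p.2, p.1) : ℝ × ℝ))] at hemb3
    have hbox3 := staircase_swap hbox2 harev
    exact core _ hbox3 _ _ hemb3
      ⟨neg_lt_neg hD.1, neg_lt_neg hD.2.1, neg_lt_neg hD.2.2⟩
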